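/- Let k ≥ 1 be an integer, set θ = (π/2)·3^{−k} and N_k = ⌈3^k/2⌉, let e_i = (cos(2(i−1)θ), sin(2(i−1)θ)) ∈ S¹ for i = 1, …, N_k, and let C = ⋃_{i=1}^{N_k} {x ∈ S¹ : d(x, e_i) < θ/2}. Then μ(C) ≥ 1/8, and C avoids every distance of the form (2l+1)·θ with 0 ≤ l ≤ N_k − 1; in particular C avoids all the distances 3^j·θ = (π/2)·3^{j−k} for j = 0, 1, …, k. -/

import Mathlib

/-!
Two points of `C` lie in arcs of length `θ` centred at even multiples of `θ`, so their angular
difference is an even multiple of `θ` up to an error of absolute value `< θ`, hence never an odd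
multiple of `θ`; since `(2 N_k - 1) θ = π / 2`, this difference stays in `[-π, π]`, where it is
recovered by `arccos ∘ cos`.

For the measure, the rotations of `C` by `a θ + b π / 2` (`a < 2`, `b < 4`) cover the circle up
to the countably many arc endpoints. By rotation invariance each copy has measure `μ C`, and each
point is null because its orbit under rotation by one radian is infinite (`π` is irrational).
-/

open MeasureTheory Set Real
open scoped RealInnerProductSpace ENNReal

local notation "ℝ²" => EuclideanSpace ℝ (Fin 2)

lemma measure_image_linearIsometryEquiv {E : Type*} [NormedAddCommGroup E] [NormedSpace ℝ E]
    [MeasurableSpace E] [BorelSpace E] {μ : Measure E} (g : E ≃ₗᵢ[ℝ] E)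
    (hg : μ.map g.symm = μ) (s : Set E) : μ (g '' s) = μ s := by
  conv_rhs => rw [← hg]
  rw [g.image_eq_preimage_symm]
  exact (g.symm.toHomeomorph.toMeasurableEquiv.map_apply s).symm

lemma measure_biUnion_image_le {E ι : Type*} [NormedAddCommGroup E] [NormedSpace ℝ E]
    [MeasurableSpace E] [BorelSpace E] {μ : Measure E}
    (hμ : ∀ g : E ≃ₗᵢ[ℝ] E, μ.map g = μ) (s : Finset ι) (g : ι → E ≃ₗᵢ[ℝ] E) (A : Set E) :
    μ (⋃ i ∈ s, g i '' A) ≤ s.card * μ A := by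
  calc μ (⋃ i ∈ s, g i '' A) ≤ ∑ i ∈ s, μ (g i '' A) := measure_biUnion_finset_le _ _
    _ = s.card * μ A := by
      simp [measure_image_linearIsometryEquiv _ (hμ _), Finset.sum_const, nsmul_eq_mul]

lemma measure_singleton_eq_zero_of_injective {α : Type*} [MeasurableSpace α]
    [MeasurableSingletonClass α] {μ : Measure α} [IsFiniteMeasure μ] {x : α} {f : ℕ → α}
    (hf : Function.Injective f) (h : ∀ n, μ {f n} = μ {x}) : μ {x} = 0 := by
  by_contra hx
  refine measure_ne_top μ (range f) ?_
  rw [← iUnion_singleton_eq_range, measure_iUnion _ fun _ => measurableSet_singleton _]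
  · simp [h, ENNReal.tsum_const_eq_top_of_ne_zero hx]
  · exact fun m n hmn => disjoint_singleton.mpr (hf.ne hmn)

lemma le_abs_intCast_mul_of_odd {z : ℤ} (hz : Odd z) (θ : ℝ) : |θ| ≤ |z * θ| := by
  have hz1 : (1 : ℝ) ≤ |(z : ℝ)| := by
    exact_mod_cast Int.one_le_abs (by rintro rfl; simp at hz)
  rw [abs_mul]
  nlinarith [abs_nonneg θ]

lemma ne_intCast_mul_of_odd {θ d : ℝ} {n q : ℤ} (hq : Odd q) (h : |d - 2 * n * θ| < |θ|) :
    d ≠ q * θ := by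
  rintro rfl
  have hodd := le_abs_intCast_mul_of_odd (hq.sub_even (even_two_mul n)) θ
  push_cast at hodd
  rw [sub_mul] at hodd
  linarith

lemma exists_eq_two_mul_add_add_mul_add_four_mul (N : ℕ) (hN : 0 < N) (m : ℤ) :
    ∃ (i a b : ℕ) (q : ℤ), i < N ∧ a < 2 ∧ b < 4 ∧
      m = 2 * i + a + (2 * N - 1) * b + 4 * (2 * N - 1) * q := by
  set P : ℤ := 2 * N - 1
  have hP : 0 < P := by omega
  have hm := (Int.emod_add_mul_ediv m P).symm
  have hr := Int.emod_nonneg m hP.ne'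
  have hrP := Int.emod_lt_of_pos m hP
  refine ⟨(m % P / 2).toNat, (m % P % 2).toNat, (m / P % 4).toNat, m / P / 4, by omega, by omega,
    by omega, ?_⟩
  rw [Int.toNat_of_nonneg (by omega), Int.toNat_of_nonneg (by omega),
    Int.toNat_of_nonneg (by omega)]
  have hd : m / P = m / P % 4 + 4 * (m / P / 4) := by omega
  have hr2 : m % P = 2 * (m % P / 2) + m % P % 2 := by omega
  linear_combination hm + P * hd + hr2

lemma exists_int_eq_half_add_or_abs_sub_lt {θ : ℝ} (hθ : 0 < θ) (t : ℝ) :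
    (∃ m : ℤ, t = θ / 2 + m * θ) ∨ ∃ m : ℤ, |t - m * θ| < θ / 2 := by
  have hround : |t / θ - round (t / θ)| ≤ 1 / 2 := abs_sub_round _
  have hscale : |t - round (t / θ) * θ| = |t / θ - round (t / θ)| * θ := by
    rw [← abs_of_pos hθ, ← abs_mul, abs_of_pos hθ, sub_mul, div_mul_cancel₀ _ hθ.ne']
  rcases hround.lt_or_eq with hlt | heq
  · exact .inr ⟨round (t / θ), by rw [hscale]; nlinarith⟩
  · left
    rw [heq] at hscale
    rcases abs_eq (by positivity : (0 : ℝ) ≤ 1 / 2 * θ) |>.mp hscale with h | h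
    · exact ⟨round (t / θ), by linarith⟩
    · exact ⟨round (t / θ) - 1, by push_cast; linarith⟩

lemma two_mul_ceil_half_of_odd {n : ℕ} (hn : Odd n) : 2 * ⌈(n : ℝ) / 2⌉₊ = n + 1 := by
  obtain ⟨m, rfl⟩ := hn
  rw [show ⌈((2 * m + 1 : ℕ) : ℝ) / 2⌉₊ = m + 1 from
    (Nat.ceil_eq_iff (by omega)).mpr ⟨by push_cast; linarith, by push_cast; linarith⟩]
  ring

noncomputable def circleExp (t : ℝ) : ℝ² :=
  (WithLp.equiv 2 (Fin 2 → ℝ)).symm ![cos t, sin t]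

lemma circleExp_eq_repr (t : ℝ) :
    circleExp t = Complex.orthonormalBasisOneI.repr (Circle.exp t) := by
  ext i; fin_cases i <;> simp [circleExp]

lemma circleExp_mem_sphere (t : ℝ) : circleExp t ∈ Metric.sphere 0 1 := by
  simp [circleExp_eq_repr]

lemma inner_circleExp (s t : ℝ) : ⟪circleExp s, circleExp t⟫ = cos (s - t) := by
  simp [circleExp, PiLp.inner_apply, Fin.sum_univ_two, cos_sub, mul_comm]

lemma circleExp_eq_circleExp_iff {s t : ℝ} : circleExp s = circleExp t ↔ (s : Angle) = t := by
  rw [circleExp_eq_repr, circleExp_eq_repr, Complex.orthonormalBasisOneI.repr.injective.eq_iff,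
    Circle.coe_inj, Circle.exp_eq_exp, Angle.angle_eq_iff_two_pi_dvd_sub]
  exact exists_congr fun m => by constructor <;> intro h <;> linarith

lemma circleExp_add_two_pi_mul_int (t : ℝ) (m : ℤ) : circleExp (t + 2 * π * m) = circleExp t :=
  circleExp_eq_circleExp_iff.mpr <| Angle.angle_eq_iff_two_pi_dvd_sub.mpr ⟨m, by ring⟩

lemma exists_circleExp_eq {x : ℝ²} (hx : x ∈ Metric.sphere 0 1) :
    ∃ t, circleExp t = x := by
  obtain ⟨t, ht⟩ := (Complex.norm_eq_one_iff (Complex.orthonormalBasisOneI.repr.symm x)).mp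
    (by rw [LinearIsometryEquiv.norm_map]; simpa using hx)
  refine ⟨t, ?_⟩
  rw [circleExp_eq_repr, Circle.coe_exp, ht, LinearIsometryEquiv.apply_symm_apply]

lemma injective_circleExp_add_natCast (t : ℝ) :
    Function.Injective fun n : ℕ => circleExp (t + n) := by
  intro n n' h
  obtain ⟨m, hm⟩ := Angle.angle_eq_iff_two_pi_dvd_sub.mp (circleExp_eq_circleExp_iff.mp h)
  obtain rfl | hm0 := eq_or_ne m 0
  · exact_mod_cast (sub_eq_zero.mp (by simpa using hm) : (n : ℝ) = n')
  · exact absurd (by push_cast at hm ⊢; linarith) <|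
      (irrational_pi.intCast_mul (mul_ne_zero two_ne_zero hm0)).ne_int (n - n')

noncomputable def planeRotation (α : ℝ) : ℝ² ≃ₗᵢ[ℝ] ℝ² :=
  (Complex.orthonormalBasisOneI.repr.symm.trans (rotation (Circle.exp α))).trans
    Complex.orthonormalBasisOneI.repr

lemma planeRotation_circleExp (α t : ℝ) :
    planeRotation α (circleExp t) = circleExp (t + α) := by
  simp [planeRotation, circleExp_eq_repr, Circle.exp_add, mul_comm]

lemma arccos_cos_eq_abs_toReal (u : ℝ) : arccos (cos u) = |(u : Angle).toReal| := by
  rw [← Angle.cos_coe, ← Angle.cos_toReal, ← cos_abs,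
    arccos_cos (abs_nonneg _) (Angle.abs_toReal_le_pi _)]

lemma sep_sphere_arccos_inner_circleExp_lt_eq_image_ball {c r : ℝ} (hr : r ≤ π) :
    {x ∈ Metric.sphere 0 1 | arccos ⟪x, circleExp c⟫ < r} = circleExp '' Metric.ball c r := by
  ext x
  constructor
  · rintro ⟨hx, hxr⟩
    obtain ⟨t, rfl⟩ := exists_circleExp_eq hx
    rw [inner_circleExp, arccos_cos_eq_abs_toReal] at hxr
    refine ⟨c + ((t - c : ℝ) : Angle).toReal, by simpa [Real.dist_eq] using hxr, ?_⟩
    rw [circleExp_eq_circleExp_iff, Angle.coe_add, Angle.coe_toReal, Angle.coe_sub,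
      add_sub_cancel]
  · rintro ⟨s, hs, rfl⟩
    rw [Metric.mem_ball, Real.dist_eq] at hs
    refine ⟨circleExp_mem_sphere s, ?_⟩
    rwa [inner_circleExp, ← cos_abs, arccos_cos (abs_nonneg _) (hs.le.trans hr)]

lemma measure_singleton_circleExp {μ : Measure (ℝ²)} [IsFiniteMeasure μ]
    (hμ : ∀ g : ℝ² ≃ₗᵢ[ℝ] ℝ², μ.map g = μ) (t : ℝ) :
    μ {circleExp t} = 0 :=
  measure_singleton_eq_zero_of_injective (injective_circleExp_add_natCast t) fun n => by
    rw [← planeRotation_circleExp, ← image_singleton,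
      measure_image_linearIsometryEquiv _ (hμ _)]

noncomputable def arcUnion (θ : ℝ) (N : ℕ) : Set (ℝ²) :=
  ⋃ i ∈ Finset.Icc 1 N, circleExp '' Metric.ball (2 * ((i : ℝ) - 1) * θ) (θ / 2)

lemma arccos_inner_ne_of_mem_arcUnion {θ : ℝ} {N : ℕ} (hN : (2 * N - 1) * θ ≤ π)
    {x y : ℝ²} (hx : x ∈ arcUnion θ N) (hy : y ∈ arcUnion θ N)
    {q : ℤ} (hq : Odd q) : arccos ⟪x, y⟫ ≠ q * θ := by
  simp only [arcUnion, mem_iUnion₂, Finset.mem_Icc] at hx hy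
  obtain ⟨i, ⟨hi1, hiN⟩, s, hs, rfl⟩ := hx
  obtain ⟨j, ⟨hj1, hjN⟩, t, ht, rfl⟩ := hy
  rw [Metric.mem_ball, Real.dist_eq] at hs ht
  have hθ : 0 < θ := by linarith [abs_nonneg (s - 2 * ((i : ℝ) - 1) * θ)]
  have hij : |(i : ℝ) - j| ≤ N - 1 :=
    abs_sub_le_of_le_of_le (by exact_mod_cast hi1) (by exact_mod_cast hiN)
      (by exact_mod_cast hj1) (by exact_mod_cast hjN)
  have hsub : |s - t - 2 * ((i : ℤ) - j : ℤ) * θ| < θ := by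
    push_cast
    calc _ = |(s - 2 * ((i : ℝ) - 1) * θ) - (t - 2 * ((j : ℝ) - 1) * θ)| := by ring_nf
      _ ≤ _ := abs_sub _ _
      _ < θ := by linarith
  have hst : |s - t| ≤ π := by
    have hcenter : |2 * (((i : ℤ) - j : ℤ) : ℝ) * θ| ≤ 2 * (N - 1) * θ := by
      push_cast
      rw [abs_mul, abs_mul, abs_two, abs_of_pos hθ]
      gcongr
    linarith [abs_sub_abs_le_abs_sub (s - t) (2 * (((i : ℤ) - j : ℤ) : ℝ) * θ)]
  rw [inner_circleExp, ← cos_abs, arccos_cos (abs_nonneg _) hst]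
  rcases abs_choice (s - t) with h | h <;> rw [h]
  · exact ne_intCast_mul_of_odd hq (by rwa [abs_of_pos hθ])
  · refine ne_intCast_mul_of_odd (n := j - i) hq ?_
    rw [abs_of_pos hθ, ← abs_neg]
    convert hsub using 2
    push_cast
    ring

lemma sphere_subset_union_planeRotation_arcUnion {θ : ℝ} {N : ℕ} (hθ : 0 < θ)
    (hN : (2 * N - 1) * θ = π / 2) :
    Metric.sphere 0 1 ⊆ range (fun m : ℤ => circleExp (θ / 2 + m * θ)) ∪
      ⋃ p ∈ Finset.range 2 ×ˢ Finset.range 4,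
        planeRotation (p.1 * θ + p.2 * (π / 2)) '' arcUnion θ N := by
  intro x hx
  obtain ⟨t, rfl⟩ := exists_circleExp_eq hx
  rcases exists_int_eq_half_add_or_abs_sub_lt hθ t with ⟨m, rfl⟩ | ⟨m, hm⟩
  · exact .inl ⟨m, rfl⟩
  have hN0 : 0 < N := by
    by_contra! h0
    simp only [Nat.le_zero.mp h0, Nat.cast_zero] at hN
    linarith [pi_pos]
  obtain ⟨i, a, b, q, hi, ha, hb, rfl⟩ := exists_eq_two_mul_add_add_mul_add_four_mul N hN0 m
  set s := t + 2 * π * ((-q : ℤ) : ℝ) - (a * θ + b * (π / 2))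
  refine .inr (mem_iUnion₂.mpr ⟨(a, b), by simp [ha, hb], circleExp s,
    mem_iUnion₂.mpr ⟨i + 1, by simp; omega, s, ?_, rfl⟩, ?_⟩)
  · rw [Metric.mem_ball, Real.dist_eq]
    convert hm using 2
    push_cast [s]
    linear_combination (b + 4 * q) * hN
  · rw [planeRotation_circleExp, sub_add_cancel, circleExp_add_two_pi_mul_int]

lemma le_eight_mul_measure_arcUnion {μ : Measure (ℝ²)}
    [IsFiniteMeasure μ] (hsupp : μ (Metric.sphere 0 1)ᶜ = 0)
    (hμ : ∀ g : ℝ² ≃ₗᵢ[ℝ] ℝ², μ.map g = μ)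
    {θ : ℝ} {N : ℕ} (hθ : 0 < θ) (hN : (2 * N - 1) * θ = π / 2) :
    μ univ ≤ 8 * μ (arcUnion θ N) := by
  have hnull : μ (range fun m : ℤ => circleExp (θ / 2 + m * θ)) = 0 := by
    rw [← iUnion_singleton_eq_range]
    exact measure_iUnion_null fun m => measure_singleton_circleExp hμ _
  calc μ univ ≤ μ (Metric.sphere 0 1) := by
        simpa [hsupp] using measure_univ_le_add_compl (μ := μ) (Metric.sphere 0 1)
    _ ≤ _ := measure_mono (sphere_subset_union_planeRotation_arcUnion hθ hN)
    _ ≤ _ := measure_union_le _ _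
    _ ≤ 8 * μ (arcUnion θ N) := by
      rw [hnull, zero_add]
      exact (measure_biUnion_image_le hμ _ _ _).trans_eq (by simp)

theorem circle_arc_construction
    (μ : Measure (EuclideanSpace ℝ (Fin 2)))
    (hprob : IsProbabilityMeasure μ)
    (hsupp : μ (Metric.sphere (0 : EuclideanSpace ℝ (Fin 2)) 1)ᶜ = 0)
    (hinv : ∀ f : EuclideanSpace ℝ (Fin 2) ≃ₗᵢ[ℝ] EuclideanSpace ℝ (Fin 2),
      μ.map f = μ)
    (k : ℕ)
    (θ : ℝ) (hθ : θ = (π / 2) * 3 ^ (-(k : ℤ)))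
    (Nk : ℕ) (hNk : Nk = ⌈(3 : ℝ) ^ k / 2⌉₊)
    (e : ℕ → EuclideanSpace ℝ (Fin 2))
    (he : ∀ i, e i = (WithLp.equiv 2 (Fin 2 → ℝ)).symm
      ![Real.cos (2 * ((i : ℝ) - 1) * θ), Real.sin (2 * ((i : ℝ) - 1) * θ)])
    (C : Set (EuclideanSpace ℝ (Fin 2)))
    (hC : C = ⋃ i ∈ Finset.Icc 1 Nk,
      {x ∈ Metric.sphere (0 : EuclideanSpace ℝ (Fin 2)) 1 |
        Real.arccos ⟪x, e i⟫ < θ / 2}) :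
    (1 / 8 : ℝ≥0∞) ≤ μ C ∧
      (∀ x ∈ C, ∀ y ∈ C, ∀ l : ℕ, l ≤ Nk - 1 →
        Real.arccos ⟪x, y⟫ ≠ (2 * (l : ℝ) + 1) * θ) ∧
      (∀ x ∈ C, ∀ y ∈ C, ∀ j : ℕ, j ≤ k →
        Real.arccos ⟪x, y⟫ ≠ 3 ^ j * θ) := by
  have hθpos : 0 < θ := by rw [hθ]; positivity
  have hNk2 : 2 * (Nk : ℝ) = 3 ^ k + 1 := by
    rw [hNk]
    exact_mod_cast two_mul_ceil_half_of_odd (Odd.pow (by decide) : Odd (3 ^ k))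
  have hNθ : (2 * Nk - 1) * θ = π / 2 := by
    rw [hNk2, hθ, zpow_neg, zpow_natCast]
    field_simp
    ring
  have hθπ : θ / 2 ≤ π := by
    nlinarith [pi_pos, one_le_pow₀ (by norm_num : (1 : ℝ) ≤ 3) (n := k)]
  have hCarc : C = arcUnion θ Nk := by
    rw [hC, arcUnion]
    refine iUnion₂_congr fun i _ => ?_
    rw [he, ← sep_sphere_arccos_inner_circleExp_lt_eq_image_ball hθπ]
    rfl
  subst hCarc
  refine ⟨ENNReal.div_le_of_le_mul ?_, fun x hx y hy l _ => ?_, fun x hx y hy j _ => ?_⟩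
  · simpa [mul_comm] using le_eight_mul_measure_arcUnion hsupp hinv hθpos hNθ
  · exact_mod_cast arccos_inner_ne_of_mem_arcUnion (by linarith [pi_pos]) hx hy
      (odd_two_mul_add_one (l : ℤ))
  · exact_mod_cast arccos_inner_ne_of_mem_arcUnion (by linarith [pi_pos]) hx hy
      (Odd.pow (by decide) : Odd ((3 : ℤ) ^ j))
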